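/- For every natural number n and every point x₀ ∈ ℝ² there exist a natural number λ, a finite set I ⊆ {k = (k₁,k₂) ∈ ℤ² : k₁² + k₂² = λ}, and coefficients μ : I → ℂ, not all zero, such that the function u(x) = ∑_{k ∈ I} μ(k) · exp(i(k₁x₁ + k₂x₂)) satisfies: (a) u is 2π-periodic in each variable, (b) Δu = −λ·u on ℝ², i.e., u is an eigenfunction of the Laplacian on the flat torus with eigenvalue λ, and (c) all iterated derivatives of u of order at most n vanish at x₀, i.e., u vanishes at x₀ to order at least n. -/

import Mathlib

open Complex

noncomputable section

/-- First partial derivative of a complex-valued function on `ℝ²`. -/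
def pd1C (f : ℝ × ℝ → ℂ) : ℝ × ℝ → ℂ := fun x => fderiv ℝ f x (1, 0)

/-- Second partial derivative of a complex-valued function on `ℝ²`. -/
def pd2C (f : ℝ × ℝ → ℂ) : ℝ × ℝ → ℂ := fun x => fderiv ℝ f x (0, 1)

/-- The Laplacian `Δu = ∂²u/∂x₁² + ∂²u/∂x₂²` of a complex-valued function on `ℝ²`. -/
def lapC (f : ℝ × ℝ → ℂ) : ℝ × ℝ → ℂ := fun x => pd1C (pd1C f) x + pd2C (pd2C f) x

/-- `2π`-periodicity of a complex-valued function on `ℝ²`. -/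
def Periodic2C (u : ℝ × ℝ → ℂ) : Prop :=
  ∀ (x : ℝ × ℝ) (k : ℤ × ℤ), u (x.1 + 2 * Real.pi * k.1, x.2 + 2 * Real.pi * k.2) = u x

/-!
The Gaussian integers `(2 + i) ^ a * (2 - i) ^ (N - a)`, `a ≤ N`, are pairwise distinct and all
have norm `5 ^ N`, so the circle `k₁² + k₂² = 5 ^ N` carries more than `N` lattice points. Every
plane wave `exp (i k·x)` with `k` on that circle is a `2π`-periodic eigenfunction of `Δ` with
eigenvalue `-5 ^ N`, and so is every linear combination of them. The jets of order `n` at `x₀`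
form a finite-dimensional complex vector space, so once `N` exceeds its dimension the jets of the
plane waves are linearly dependent; the corresponding combination vanishes to order `n` at `x₀`.
-/

open Finset

section LatticePoints

theorem pow_mul_pow_sub_injOn {R : Type*} [CommRing R] [IsDomain R] {x y : R}
    (hx : x ≠ 0) (hy : y ≠ 0) (hxy : ∀ d, 0 < d → y ^ d ≠ x ^ d) (N : ℕ) :
    Set.InjOn (fun a => x ^ a * y ^ (N - a)) (Set.Iic N) := by
  intro a ha b hb hab
  by_contra hne
  wlog hlt : a < b generalizing a b
  · exact this hb ha hab.symm (Ne.symm hne) (by omega)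
  obtain ⟨d, rfl⟩ := Nat.exists_eq_add_of_lt hlt
  have hN : N - a = N - (a + d + 1) + (d + 1) := by simp only [Set.mem_Iic] at hb; omega
  refine hxy (d + 1) d.succ_pos (mul_left_cancel₀ (mul_ne_zero (pow_ne_zero a hx)
    (pow_ne_zero (N - (a + d + 1)) hy)) ?_)
  simp only [hN, pow_add] at hab
  linear_combination hab

theorem GaussianInt.two_sub_I_pow_ne_two_add_I_pow {d : ℕ} (hd : 0 < d) :
    (⟨2, -1⟩ : GaussianInt) ^ d ≠ ⟨2, 1⟩ ^ d := fun h => by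
  -- reduce modulo the prime `2 - i`, i.e. modulo `5` with `i ↦ 2`
  have hmod := congrArg (Zsqrtd.lift ⟨(2 : ZMod 5), by decide⟩) h
  simp only [map_pow, Zsqrtd.lift_apply_apply] at hmod
  norm_num [zero_pow hd.ne'] at hmod
  have h4 : (4 : ZMod 5) ≠ 0 := by decide
  have : Fact (Nat.Prime 5) := ⟨by norm_num⟩
  exact pow_ne_zero d h4 hmod.symm

theorem exists_finset_sq_add_sq_eq (N : ℕ) :
    ∃ (lam : ℕ) (S : Finset (ℤ × ℤ)), N < #S ∧ ∀ k ∈ S, k.1 ^ 2 + k.2 ^ 2 = (lam : ℤ) := by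
  let z : ℕ → GaussianInt := fun a => ⟨2, 1⟩ ^ a * ⟨2, -1⟩ ^ (N - a)
  have hz : Set.InjOn z (Set.Iic N) := pow_mul_pow_sub_injOn (by decide) (by decide)
    (fun _ => GaussianInt.two_sub_I_pow_ne_two_add_I_pow) N
  refine ⟨5 ^ N, (range (N + 1)).image fun a => ((z a).re, (z a).im), ?_, ?_⟩
  · rw [card_image_of_injOn]
    · simp
    · intro a ha b hb hab
      simp only [Prod.mk.injEq] at hab
      exact hz (by simpa [Nat.lt_succ_iff] using ha) (by simpa [Nat.lt_succ_iff] using hb)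
        (Zsqrtd.ext hab.1 hab.2)
  · simp only [mem_image, mem_range, forall_exists_index, and_imp]
    rintro _ a ha rfl
    have hnorm : (z a).norm = 5 ^ N := by
      have norm_pow (w : GaussianInt) (m : ℕ) : (w ^ m).norm = w.norm ^ m :=
        map_pow Zsqrtd.normMonoidHom w m
      rw [show N = a + (N - a) by omega, pow_add, Zsqrtd.norm_mul, norm_pow, norm_pow]
      rfl
    rw [Zsqrtd.norm_def] at hnorm
    push_cast
    linear_combination hnorm

end LatticePoints

section PlaneWaves

def phaseCLM (k : ℤ × ℤ) : ℝ × ℝ →L[ℝ] ℂ :=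
  I • ((k.1 : ℂ) • ofRealCLM.comp (.fst ℝ ℝ ℝ) + (k.2 : ℂ) • ofRealCLM.comp (.snd ℝ ℝ ℝ))

@[simp]
theorem phaseCLM_apply (k : ℤ × ℤ) (x : ℝ × ℝ) :
    phaseCLM k x = I * (k.1 * x.1 + k.2 * x.2) := by
  simp [phaseCLM, mul_add]

def planeWave (k : ℤ × ℤ) (x : ℝ × ℝ) : ℂ := exp (I * (k.1 * x.1 + k.2 * x.2))

theorem planeWave_eq_exp_phaseCLM (k : ℤ × ℤ) : planeWave k = fun x => exp (phaseCLM k x) := by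
  ext x; simp [planeWave]

theorem contDiff_planeWave (k : ℤ × ℤ) {m : WithTop ℕ∞} : ContDiff ℝ m (planeWave k) := by
  rw [planeWave_eq_exp_phaseCLM]
  exact (phaseCLM k).contDiff.cexp

theorem planeWave_add_two_pi_mul (k : ℤ × ℤ) (x : ℝ × ℝ) (m : ℤ × ℤ) :
    planeWave k (x.1 + 2 * Real.pi * m.1, x.2 + 2 * Real.pi * m.2) = planeWave k x := by
  have hphase : I * (k.1 * ↑(x.1 + 2 * Real.pi * m.1) + k.2 * ↑(x.2 + 2 * Real.pi * m.2)) =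
      I * (k.1 * x.1 + k.2 * x.2) + ((k.1 * m.1 + k.2 * m.2 : ℤ) : ℂ) * (2 * Real.pi * I) := by
    push_cast; ring
  rw [planeWave, planeWave, hphase, exp_add, exp_int_mul_two_pi_mul_I, mul_one]

theorem periodic2C_sum_planeWave (S : Finset (ℤ × ℤ)) (c : ℤ × ℤ → ℂ) :
    Periodic2C fun x => ∑ k ∈ S, c k * planeWave k x := fun x m => by
  simp only [planeWave_add_two_pi_mul]

theorem fderiv_sum_planeWave (S : Finset (ℤ × ℤ)) (c : ℤ × ℤ → ℂ) (x : ℝ × ℝ) :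
    fderiv ℝ (fun x => ∑ k ∈ S, c k * planeWave k x) x =
      ∑ k ∈ S, (c k * planeWave k x) • phaseCLM k := by
  refine (HasFDerivAt.fun_sum fun k _ => ?_).fderiv
  have hwave : HasFDerivAt (planeWave k) (planeWave k x • phaseCLM k) x := by
    rw [planeWave_eq_exp_phaseCLM]; exact (phaseCLM k).hasFDerivAt.cexp
  simpa [smul_smul] using hwave.const_mul (c k)

theorem pd1C_sum_planeWave (S : Finset (ℤ × ℤ)) (c : ℤ × ℤ → ℂ) :
    pd1C (fun x => ∑ k ∈ S, c k * planeWave k x) =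
      fun x => ∑ k ∈ S, c k * (I * k.1) * planeWave k x := by
  ext x
  simp [pd1C, fderiv_sum_planeWave, mul_right_comm]

theorem pd2C_sum_planeWave (S : Finset (ℤ × ℤ)) (c : ℤ × ℤ → ℂ) :
    pd2C (fun x => ∑ k ∈ S, c k * planeWave k x) =
      fun x => ∑ k ∈ S, c k * (I * k.2) * planeWave k x := by
  ext x
  simp [pd2C, fderiv_sum_planeWave, mul_right_comm]

theorem lapC_sum_planeWave {lam : ℕ} {S : Finset (ℤ × ℤ)}
    (hS : ∀ k ∈ S, k.1 ^ 2 + k.2 ^ 2 = (lam : ℤ)) (c : ℤ × ℤ → ℂ) (x : ℝ × ℝ) :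
    lapC (fun x => ∑ k ∈ S, c k * planeWave k x) x =
      -(lam : ℂ) * ∑ k ∈ S, c k * planeWave k x := by
  simp only [lapC, pd1C_sum_planeWave, pd2C_sum_planeWave, ← sum_add_distrib, mul_sum]
  refine sum_congr rfl fun k hk => ?_
  have hk' : (k.1 : ℂ) ^ 2 + (k.2 : ℂ) ^ 2 = lam := by exact_mod_cast hS k hk
  linear_combination (c k * planeWave k x) * ((k.1 : ℂ) ^ 2 + (k.2 : ℂ) ^ 2) * I_sq
    - c k * planeWave k x * hk'

end PlaneWaves

section Jets

variable {E : Type*} [NormedAddCommGroup E] [NormedSpace ℝ E] [FiniteDimensional ℝ E]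

instance ContinuousMultilinearMap.moduleFinite_complex (ι : Type*) [Fintype ι] :
    Module.Finite ℂ (ContinuousMultilinearMap ℝ (fun _ : ι => E) ℂ) :=
  have : Module.Finite ℝ (ContinuousMultilinearMap ℝ (fun _ : ι => E) ℂ) :=
    .of_injective ContinuousMultilinearMap.toMultilinearMapLinear
      ContinuousMultilinearMap.toMultilinearMap_injective
  .of_restrictScalars_finite ℝ ℂ _

variable (E) in
abbrev JetSpace (n : ℕ) : Type _ :=
  (j : Fin (n + 1)) → ContinuousMultilinearMap ℝ (fun _ : Fin j => E) ℂ

theorem exists_ne_zero_iteratedFDeriv_sum_eq_zero {ι : Type*} {n : ℕ} (x₀ : E)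
    (S : Finset ι) (f : ι → E → ℂ) (hf : ∀ k ∈ S, ContDiff ℝ n (f k))
    (hS : Module.finrank ℂ (JetSpace E n) < #S) :
    ∃ c : ι → ℂ, (∃ k ∈ S, c k ≠ 0) ∧
      ∀ j ≤ n, iteratedFDeriv ℝ j (fun x => ∑ k ∈ S, c k * f k x) x₀ = 0 := by
  classical
  let jet : S → JetSpace E n := fun k j => iteratedFDeriv ℝ j (f k) x₀
  have hdep : ¬ LinearIndependent ℂ jet := fun h =>
    hS.not_ge (by simpa using h.fintype_card_le_finrank)
  obtain ⟨c, hc, k, hk⟩ := Fintype.not_linearIndependent_iff.mp hdep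
  let c' : ι → ℂ := fun i => if h : i ∈ S then c ⟨i, h⟩ else 0
  refine ⟨c', ⟨k, k.2, by simpa [c'] using hk⟩, fun j hj => ?_⟩
  have hsmooth : ∀ i ∈ S, ContDiffAt ℝ j (fun x => c' i • f i x) x₀ :=
    fun i hi => ((hf i hi).of_le (mod_cast hj)).contDiffAt.const_smul _
  calc iteratedFDeriv ℝ j (fun x => ∑ i ∈ S, c' i * f i x) x₀
      = ∑ i ∈ S, c' i • iteratedFDeriv ℝ j (f i) x₀ := by
        refine (iteratedFDeriv_fun_sum_apply hsmooth).trans (sum_congr rfl fun i hi => ?_)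
        exact iteratedFDeriv_const_smul_apply' ((hf i hi).of_le (mod_cast hj)).contDiffAt
    _ = (∑ i, c i • jet i) ⟨j, by omega⟩ := by
        rw [← sum_coe_sort S]; simp [c', jet]
    _ = 0 := by rw [hc]; rfl

end Jets

theorem eigenfunction_with_high_vanishing_order (n : ℕ) (x₀ : ℝ × ℝ) :
    ∃ (lam : ℕ) (I : Finset (ℤ × ℤ)) (μ : ℤ × ℤ → ℂ),
      (∀ k ∈ I, k.1 ^ 2 + k.2 ^ 2 = (lam : ℤ)) ∧
      (∃ k ∈ I, μ k ≠ 0) ∧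
      (fun u : ℝ × ℝ → ℂ =>
          Periodic2C u ∧
          (∀ x, lapC u x = -(lam : ℂ) * u x) ∧
          (∀ j : ℕ, j ≤ n → iteratedFDeriv ℝ j u x₀ = 0))
        (fun x => ∑ k ∈ I,
          μ k * Complex.exp (Complex.I * ((k.1 : ℂ) * (x.1 : ℂ) + (k.2 : ℂ) * (x.2 : ℂ)))) := by
  obtain ⟨lam, S, hS, hcircle⟩ :=
    exists_finset_sq_add_sq_eq (Module.finrank ℂ (JetSpace (ℝ × ℝ) n))
  obtain ⟨μ, hμ, hvanish⟩ :=
    exists_ne_zero_iteratedFDeriv_sum_eq_zero x₀ S planeWave (fun k _ => contDiff_planeWave k) hS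
  exact ⟨lam, S, μ, hcircle, hμ, periodic2C_sum_planeWave S μ, lapC_sum_planeWave hcircle μ,
    hvanish⟩

end
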